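/- In the setting where w = ∑_{j=1}^n y_j x_j with x_j = μ_{g(j)} + z_j, z_j i.i.d. N(0,σ²I_d), group means pairwise orthogonal with squared norm kμ², and (x_r, y_r) a point whose group contains only itself: y_r(w·x_r) ≥ ‖z_r‖₂² + kμ² − ∑_{j≠r} |z_r·z_j| (after choosing labels so signs work out, the cross-mean terms vanish by orthogonality), and hence if ‖z_r‖₂² ≥ dσ²/2 and |z_r·z_j| ≤ cσ²√(d log(n/δ)) for all j ≠ r and d ≥ C n² log(n/δ), then y_r(w·x_r) > 0. -/

import Mathlib

/-!
Expanding `w ⬝ᵥ x_r = ∑ⱼ yⱼ (xⱼ ⬝ᵥ x_r)`, the term `j = r` contributes `‖μ_r‖² + ‖z_r‖²`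
because `y_r² = 1`, and by the orthogonality of `μ_r` to the other means and of the means to
the noise every other term is `± z_r ⬝ᵥ z_j`. Under the stated bounds the `n - 1` cross terms
add up to at most `n c σ² √(d log (n / δ))`, which is below `d σ² / 2 ≤ ‖z_r‖²` as soon as
`d > 4 c² n² log (n / δ)`.
-/

open Finset Matrix Real

section Margin

variable {ι m R : Type*} [Fintype ι] [DecidableEq ι] [Fintype m] [CommRing R]

theorem mul_sum_smul_dotProduct_eq (x : ι → m → R) (y : ι → R) (r : ι) (hr : y r * y r = 1) :
    y r * ((∑ j, y j • x j) ⬝ᵥ x r) =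
      x r ⬝ᵥ x r + ∑ j ∈ univ.erase r, y r * y j * (x j ⬝ᵥ x r) := by
  simp only [sum_dotProduct, smul_dotProduct, smul_eq_mul, mul_sum, ← mul_assoc]
  rw [← add_sum_erase _ _ (mem_univ r), hr, one_mul]

theorem sub_sum_abs_le_mul_sum_smul_dotProduct [LinearOrder R] [IsStrictOrderedRing R]
    (x : ι → m → R) (y : ι → R) (hy : ∀ j, |y j| = 1) (r : ι) :
    x r ⬝ᵥ x r - ∑ j ∈ univ.erase r, |x j ⬝ᵥ x r| ≤ y r * ((∑ j, y j • x j) ⬝ᵥ x r) := by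
  have hr : y r * y r = 1 := by rw [← abs_mul_self, abs_mul, hy r, one_mul]
  rw [mul_sum_smul_dotProduct_eq x y r hr, sub_eq_add_neg, ← sum_neg_distrib]
  gcongr with j
  calc -|x j ⬝ᵥ x r| = -|y r * y j * (x j ⬝ᵥ x r)| := by simp [abs_mul, hy]
    _ ≤ _ := neg_abs_le _

theorem add_dotProduct_add_of_orthogonal (a b c e : m → R) (hae : a ⬝ᵥ e = 0)
    (hcb : c ⬝ᵥ b = 0) : (a + b) ⬝ᵥ (c + e) = a ⬝ᵥ c + b ⬝ᵥ e := by
  rw [add_dotProduct, dotProduct_add, dotProduct_add, hae, dotProduct_comm b c, hcb]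
  ring

theorem sub_sum_abs_noise_le_margin [LinearOrder R] [IsStrictOrderedRing R]
    (μ z : ι → m → R) (y : ι → R) (hy : ∀ j, |y j| = 1) (r : ι)
    (horth : ∀ j, j ≠ r → μ j ⬝ᵥ μ r = 0) (hμz : ∀ j, μ j ⬝ᵥ z r = 0)
    (hzμ : ∀ j, μ r ⬝ᵥ z j = 0) :
    z r ⬝ᵥ z r + μ r ⬝ᵥ μ r - ∑ j ∈ univ.erase r, |z r ⬝ᵥ z j| ≤
      y r * ((∑ j, y j • (μ j + z j)) ⬝ᵥ (μ r + z r)) := by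
  have hsplit (j : ι) : (μ j + z j) ⬝ᵥ (μ r + z r) = μ j ⬝ᵥ μ r + z j ⬝ᵥ z r :=
    add_dotProduct_add_of_orthogonal _ _ _ _ (hμz j) (hzμ j)
  refine le_of_eq_of_le ?_ (sub_sum_abs_le_mul_sum_smul_dotProduct (fun j ↦ μ j + z j) y hy r)
  refine congrArg₂ _ (by rw [hsplit]; ring) (sum_congr rfl fun j hj ↦ ?_)
  rw [hsplit, horth j (ne_of_mem_erase hj), zero_add, dotProduct_comm]

end Margin

theorem two_mul_abs_mul_sqrt_lt {a d L : ℝ} (hL : 0 ≤ L) (h : 4 * a ^ 2 * L < d) :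
    2 * |a| * √(d * L) < d := by
  have hd : 0 < d := lt_of_le_of_lt (by positivity) h
  have hsq : 2 * |a| * √(d * L) = √(4 * a ^ 2 * L * d) := by
    rw [← sqrt_sq (by positivity : 0 ≤ 2 * |a|), ← sqrt_mul (by positivity), mul_pow, sq_abs]
    ring_nf
  rw [hsq, sqrt_lt' hd]
  nlinarith [mul_lt_mul_of_pos_right h hd]

theorem sum_lt_of_forall_le_mul_sqrt {κ : Type*} (s : Finset κ) (a : κ → ℝ) {c σ d L : ℝ}
    {n : ℕ} (hs : #s ≤ n) (hσ : 0 < σ) (hL : 0 ≤ L) (hd : 4 * (c * n) ^ 2 * L < d)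
    (ha : ∀ j ∈ s, a j ≤ c * σ ^ 2 * √(d * L)) :
    ∑ j ∈ s, a j < d * σ ^ 2 / 2 := calc
  ∑ j ∈ s, a j ≤ #s • |c * σ ^ 2 * √(d * L)| :=
    sum_le_card_nsmul _ _ _ fun j hj ↦ (ha j hj).trans (le_abs_self _)
  _ ≤ n * |c * σ ^ 2 * √(d * L)| := by
    rw [nsmul_eq_mul]
    gcongr
  _ = σ ^ 2 / 2 * (2 * |c * n| * √(d * L)) := by
    simp only [abs_mul, abs_of_nonneg (sq_nonneg σ), abs_of_nonneg (sqrt_nonneg _), Nat.abs_cast]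
    ring
  _ < σ ^ 2 / 2 * d := by gcongr; exact two_mul_abs_mul_sqrt_lt hL hd
  _ = d * σ ^ 2 / 2 := by ring

theorem rare_example_correct_margin_general (c : ℝ) :
    ∃ C : ℝ, 0 < C ∧
      ∀ (d n k : ℕ) (μ σ δ : ℝ) (g : Fin n → Fin 3) (μv : Fin 3 → Fin d → ℝ)
        (z : Fin n → Fin d → ℝ) (y : Fin n → ℝ) (r : Fin n),
        0 < σ → 0 < δ → δ < 1 → 1 ≤ n →
        (∀ j, y j = 1 ∨ y j = -1) →
        (∀ j, j ≠ r → ∑ i, μv (g j) i * μv (g r) i = 0) →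
        (∑ i, (μv (g r) i) ^ 2 = k * μ ^ 2) →
        (∀ j, ∑ i, μv (g j) i * z r i = 0) →
        (∀ j, ∑ i, μv (g r) i * z j i = 0) →
        ((∑ i, (z r i) ^ 2) + k * μ ^ 2 -
            ∑ j ∈ Finset.univ.erase r, |∑ i, z r i * z j i| ≤
          y r * ∑ i, (∑ j, y j * (μv (g j) i + z j i)) * (μv (g r) i + z r i)) ∧
        ((d : ℝ) * σ ^ 2 / 2 ≤ ∑ i, (z r i) ^ 2 →
          (∀ j, j ≠ r →
            |∑ i, z r i * z j i| ≤ c * σ ^ 2 * Real.sqrt (d * Real.log (n / δ))) →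
          (d : ℝ) ≥ C * n ^ 2 * Real.log (n / δ) →
          0 < y r * ∑ i, (∑ j, y j * (μv (g j) i + z j i)) * (μv (g r) i + z r i)) := by
  refine ⟨4 * c ^ 2 + 1, by positivity, ?_⟩
  intro d n k μ σ δ g μv z y r hσ hδ hδ1 hn hy horth hnorm hμz hzμ
  have hw : ∑ i, (∑ j, y j * (μv (g j) i + z j i)) * (μv (g r) i + z r i) =
      (∑ j, y j • (μv (g j) + z j)) ⬝ᵥ (μv (g r) + z r) := by
    simp only [dotProduct, Finset.sum_apply, Pi.smul_apply, Pi.add_apply, smul_eq_mul]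
  have hmargin := sub_sum_abs_noise_le_margin (fun j ↦ μv (g j)) z y
    (fun j ↦ by rcases hy j with h | h <;> simp [h]) r horth hμz hzμ
  rw [← hw] at hmargin
  simp only [dotProduct, ← sq, hnorm] at hmargin
  refine ⟨hmargin, fun hz hcross hd ↦ ?_⟩
  have hL : 0 < log (n / δ) :=
    log_pos ((one_lt_div hδ).2 (by linarith [(Nat.one_le_cast.2 hn : (1 : ℝ) ≤ n)]))
  have hnoise := sum_lt_of_forall_le_mul_sqrt (univ.erase r) (fun j ↦ |∑ i, z r i * z j i|)
    (card_erase_le.trans_eq (card_fin n)) hσ hL.le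
    (by nlinarith [mul_pos (by positivity : (0 : ℝ) < n ^ 2) hL])
    (fun j hj ↦ hcross j (ne_of_mem_erase hj))
  have hk : 0 ≤ (k : ℝ) * μ ^ 2 := by positivity
  linarith

/-- The rare example is correctly classified by the sum classifier `w = ∑ y_j x_j`:
its margin is at least `‖z_r‖² + kμ² - ∑_{j≠r} |z_r·z_j|`, and under the norm and
cross-product bounds together with `d ≥ C n² log(n/δ)` the margin is positive. -/
theorem rare_example_correct_margin (c : ℝ) (hc : 0 < c) :
    ∃ C : ℝ, 0 < C ∧
      ∀ (d n k : ℕ) (μ σ δ : ℝ) (g : Fin n → Fin 3) (μv : Fin 3 → Fin d → ℝ)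
        (z : Fin n → Fin d → ℝ) (y : Fin n → ℝ) (r : Fin n),
        0 < σ → 0 < δ → δ < 1 → 1 ≤ n →
        (∀ j, y j = 1 ∨ y j = -1) →
        (∀ j, j ≠ r → ∑ i, μv (g j) i * μv (g r) i = 0) →
        (∑ i, (μv (g r) i) ^ 2 = k * μ ^ 2) →
        (∀ j, ∑ i, μv (g j) i * z r i = 0) →
        (∀ j, ∑ i, μv (g r) i * z j i = 0) →
        ((∑ i, (z r i) ^ 2) + k * μ ^ 2 -
            ∑ j ∈ Finset.univ.erase r, |∑ i, z r i * z j i| ≤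
          y r * ∑ i, (∑ j, y j * (μv (g j) i + z j i)) * (μv (g r) i + z r i)) ∧
        ((d : ℝ) * σ ^ 2 / 2 ≤ ∑ i, (z r i) ^ 2 →
          (∀ j, j ≠ r →
            |∑ i, z r i * z j i| ≤ c * σ ^ 2 * Real.sqrt (d * Real.log (n / δ))) →
          (d : ℝ) ≥ C * n ^ 2 * Real.log (n / δ) →
          0 < y r * ∑ i, (∑ j, y j * (μv (g j) i + z j i)) * (μv (g r) i + z r i)) :=
  rare_example_correct_margin_general c
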